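/- Scaling invariance of the maximum k-regret ratio: if every point of D is scaled coordinate-wise by a fixed vector of positive scalars (i.e., each attribute is rescaled), and the family of utility functions is the set of all positive linear functions, then the maximum k-regret ratio of every subset S ⊆ D is unchanged. -/
import Mathlib


open scoped Classical

/-- The `k`-th largest value of `f` over the finite set `S` (the `k`-gain). -/
noncomputable def kgain {α : Type*} (S : Finset α) (f : α → ℝ) (k : ℕ) : ℝ :=
  ((S.val.map f).sort (· ≤ ·)).getD (S.card - k) 0

/-- The gain of `S` under `f`: the best score in `S`. -/
noncomputable def gain {α : Type*} (S : Finset α) (f : α → ℝ) : ℝ :=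
  sSup (f '' ↑S)

/-- The `k`-regret ratio of `S ⊆ D` under `f`. -/
noncomputable def kratio {α : Type*} (D S : Finset α) (f : α → ℝ) (k : ℕ) : ℝ :=
  max (kgain D f k - gain S f) 0 / kgain D f k

/-- The maximum `k`-regret ratio of `S ⊆ D` over the family of all positive linear
utility functions `x ↦ w·x`. -/
noncomputable def maxKRatio {d : ℕ} (D S : Finset (Fin d → ℝ)) (k : ℕ) : ℝ :=
  sSup {r : ℝ | ∃ w : Fin d → ℝ, (∀ i, 0 < w i) ∧
    r = kratio D S (fun p => ∑ i, w i * p i) k}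

/-- Scaling invariance: rescaling every attribute by fixed positive scalars `c i`
leaves the maximum `k`-regret ratio of every subset `S ⊆ D` unchanged, when the family
of utility functions is the set of all positive linear functions. -/
theorem stmt14 {d k : ℕ} (D S : Finset (Fin d → ℝ)) (hSD : S ⊆ D) (hS : S.Nonempty)
    (hD : ∀ p ∈ D, ∀ i, 0 < p i)
    (c : Fin d → ℝ) (hc : ∀ i, 0 < c i) :
    maxKRatio (D.image fun p i => c i * p i) (S.image fun p i => c i * p i) k =
      maxKRatio D S k := by
  set g : (Fin d → ℝ) → (Fin d → ℝ) := fun p i => c i * p i with hg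
  have hginj : Function.Injective g := by
    intro p q h
    funext i
    have := congrFun h i
    simp only [g] at this
    exact mul_left_cancel₀ (hc i).ne' this
  have hkgain : ∀ (T : Finset (Fin d → ℝ)) (f : (Fin d → ℝ) → ℝ),
      kgain (T.image g) f k = kgain T (f ∘ g) k := by
    intro T f
    unfold kgain
    rw [Finset.image_val_of_injOn (hginj.injOn), Multiset.map_map,
      Finset.card_image_of_injective _ hginj]
  have hgain : ∀ (T : Finset (Fin d → ℝ)) (f : (Fin d → ℝ) → ℝ),
      gain (T.image g) f = gain T (f ∘ g) := by
    intro T f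
    unfold gain
    rw [Finset.coe_image, Set.image_image]
    rfl
  have hkratio : ∀ (f : (Fin d → ℝ) → ℝ),
      kratio (D.image g) (S.image g) f k = kratio D S (f ∘ g) k := by
    intro f
    unfold kratio
    rw [hkgain, hgain]
  unfold maxKRatio
  congr 1
  ext r
  simp only [Set.mem_setOf_eq]
  constructor
  · rintro ⟨w, hw, rfl⟩
    refine ⟨fun i => w i * c i, fun i => mul_pos (hw i) (hc i), ?_⟩
    rw [hkratio]
    congr 1
    funext p
    simp only [Function.comp, g]
    exact Finset.sum_congr rfl fun i _ => by ring
  · rintro ⟨w, hw, rfl⟩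
    refine ⟨fun i => w i / c i, fun i => div_pos (hw i) (hc i), ?_⟩
    rw [hkratio]
    congr 1
    funext p
    simp only [Function.comp, g]
    exact Finset.sum_congr rfl fun i _ => by
      rw [div_mul_eq_mul_div, mul_div_assoc, mul_div_cancel_left₀ _ (hc i).ne']
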